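/- arXiv:1608.01123 — 3 statements merged into one kernel-verified Lean document; each statement's English description precedes it below -/
import Mathlib

section
/- Assume ν > 0. Suppose x_1, x_2 > 0 satisfy x_1^{p−1} + να x_1^{α/2−1} x_2^{β/2} = 1 and x_2^{p−1} + νβ x_1^{α/2} x_2^{β/2−1} = 1, and let z ∈ D^{1,2}(ℝ^N) be a weak solution of −Δz − λ z/|x|² = z^{2*−1} with z > 0 almost everywhere. Then (√x_1 · z, √x_2 · z) is a positive weak solution of the system (S2). -/
open MeasureTheory Finset

noncomputable section

/-- Euclidean space ℝ^N. -/
abbrev Euc (N : ℕ) := EuclideanSpace ℝ (Fin N)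

/-- The critical Sobolev exponent 2* = 2N/(N-2). -/
def tS (N : ℕ) : ℝ := 2 * N / ((N : ℝ) - 2)

/-- Smooth compactly supported test function. -/
def IsTest (N : ℕ) (φ : Euc N → ℝ) : Prop :=
  ContDiff ℝ (⊤ : ℕ∞) φ ∧ HasCompactSupport φ

/-- `v` is the weak gradient of `u`. -/
def HasWeakGrad (N : ℕ) (u : Euc N → ℝ) (v : Euc N → Euc N) : Prop :=
  ∀ i : Fin N, ∀ φ : Euc N → ℝ, IsTest N φ →
    ∫ x, u x * (fderiv ℝ φ x) (EuclideanSpace.single i 1) = - ∫ x, v x i * φ x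

/-- `u ∈ D^{1,2}(ℝ^N)` with weak gradient `v`. -/
def MemD12 (N : ℕ) (u : Euc N → ℝ) (v : Euc N → Euc N) : Prop :=
  MemLp u (ENNReal.ofReal (tS N)) volume ∧
  MemLp (fun x => ‖v x‖) 2 volume ∧
  HasWeakGrad N u v

/-- `‖u‖²_λ = ∫ (|∇u|² - λ u²/|x|²)`, where `v` is the weak gradient of `u`. -/
def normSqL (N : ℕ) (lam : ℝ) (u : Euc N → ℝ) (v : Euc N → Euc N) : ℝ :=
  ∫ x, (‖v x‖ ^ 2 - lam * (u x) ^ 2 / ‖x‖ ^ 2)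

/-- The energy functional J. -/
def Jfun (N r : ℕ) (lam : Fin r → ℝ) (β a : Fin r → Fin r → ℝ)
    (u : Fin r → Euc N → ℝ) (v : Fin r → Euc N → Euc N) : ℝ :=
  (∑ j, (1 / 2 : ℝ) * normSqL N (lam j) (u j) (v j))
    - (1 / tS N) * ∑ j, ∫ x, |u j x| ^ tS N
    - (1 / 2 : ℝ) * ∑ j, ∑ k ∈ univ.filter (fun k => k ≠ j),
        β j k * ∫ x, |u j x| ^ a j k * |u k x| ^ a k j

/-- Membership in the Nehari manifold 𝒩. -/
def InNehari (N r : ℕ) (lam : Fin r → ℝ) (β a : Fin r → Fin r → ℝ)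
    (u : Fin r → Euc N → ℝ) (v : Fin r → Euc N → Euc N) : Prop :=
  (∀ j, ¬ (u j =ᵐ[volume] (0 : Euc N → ℝ))) ∧
  ∀ j, normSqL N (lam j) (u j) (v j) =
    (∫ x, |u j x| ^ tS N) + ∑ k ∈ univ.filter (fun k => k ≠ j),
      β j k * a j k * ∫ x, |u j x| ^ a j k * |u k x| ^ a k j

/-- Θ = inf_{𝒩} J. -/
def Theta (N r : ℕ) (lam : Fin r → ℝ) (β a : Fin r → Fin r → ℝ) : ℝ :=
  sInf { c | ∃ u v, (∀ j, MemD12 N (u j) (v j)) ∧ InNehari N r lam β a u v ∧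
    c = Jfun N r lam β a u v }

/-- The best Hardy–Sobolev constant S(λ). -/
def Slam (N : ℕ) (lam : ℝ) : ℝ :=
  sInf { s | ∃ u v, MemD12 N u v ∧ ¬ (u =ᵐ[volume] (0 : Euc N → ℝ)) ∧
    s = normSqL N lam u v / (∫ x, |u x| ^ tS N) ^ (2 / tS N) }

/-- Weak solution of the scalar equation −Δz − λz/|x|² = z^{2*−1}. -/
def IsScalarSol (N : ℕ) (lam : ℝ) (z : Euc N → ℝ) (gz : Euc N → Euc N) : Prop :=
  ∀ φ : Euc N → ℝ, IsTest N φ →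
    ∫ x, ((fderiv ℝ φ x) (gz x) - lam * z x * φ x / ‖x‖ ^ 2) =
    ∫ x, z x ^ (tS N - 1) * φ x

/-- Weak solution of the two-component system (S2). -/
def IsWeakSol2 (N : ℕ) (lam ν a b : ℝ) (u : Euc N → ℝ) (gu : Euc N → Euc N)
    (v : Euc N → ℝ) (gv : Euc N → Euc N) : Prop :=
  (∀ φ : Euc N → ℝ, IsTest N φ →
    ∫ x, ((fderiv ℝ φ x) (gu x) - lam * u x * φ x / ‖x‖ ^ 2) =
    ∫ x, (u x ^ (tS N - 1) + ν * a * u x ^ (a - 1) * v x ^ b) * φ x) ∧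
  (∀ φ : Euc N → ℝ, IsTest N φ →
    ∫ x, ((fderiv ℝ φ x) (gv x) - lam * v x * φ x / ‖x‖ ^ 2) =
    ∫ x, (v x ^ (tS N - 1) + ν * b * u x ^ a * v x ^ (b - 1)) * φ x)


lemma key_alg (x₁ x₂ a b T ν t : ℝ) (hx₁ : 0 < x₁) (hx₂ : 0 < x₂) (ht : 0 < t)
    (hab : a + b = T)
    (heq : x₁ ^ (T/2 - 1) + ν * a * x₁ ^ (a/2 - 1) * x₂ ^ (b/2) = 1) :
    (Real.sqrt x₁ * t) ^ (T - 1) + ν * a * (Real.sqrt x₁ * t) ^ (a - 1) * (Real.sqrt x₂ * t) ^ b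
    = Real.sqrt x₁ * t ^ (T - 1) := by
  rw [Real.sqrt_eq_rpow, Real.sqrt_eq_rpow]
  rw [Real.mul_rpow (Real.rpow_nonneg hx₁.le _) ht.le,
      Real.mul_rpow (Real.rpow_nonneg hx₁.le _) ht.le,
      Real.mul_rpow (Real.rpow_nonneg hx₂.le _) ht.le,
      ← Real.rpow_mul hx₁.le, ← Real.rpow_mul hx₁.le, ← Real.rpow_mul hx₂.le]
  have e1 : (1/2:ℝ) * (T - 1) = 1/2 + (T/2 - 1) := by ring
  have e2 : (1/2:ℝ) * (a - 1) = 1/2 + (a/2 - 1) := by ring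
  have e3 : (1/2:ℝ) * b = b/2 := by ring
  rw [e1, e2, e3, Real.rpow_add hx₁, Real.rpow_add hx₁]
  have e4 : t ^ (a - 1) * t ^ b = t ^ (T - 1) := by
    rw [← Real.rpow_add ht, show a - 1 + b = T - 1 by linarith]
  linear_combination (x₁ ^ (1/2:ℝ) * t ^ (T-1)) * heq
    + (ν * a * x₁ ^ (1/2:ℝ) * x₁ ^ (a/2 - 1) * x₂ ^ (b/2)) * e4

lemma memD12_const_mul (N : ℕ) (c : ℝ) (z : Euc N → ℝ) (gz : Euc N → Euc N)
    (h : MemD12 N z gz) : MemD12 N (fun x => c * z x) (fun x => c • gz x) := by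
  obtain ⟨h1, h2, h3⟩ := h
  refine ⟨h1.const_mul c, ?_, ?_⟩
  · have he : (fun x : Euc N => ‖c • gz x‖) = fun x => |c| * ‖gz x‖ := by
      funext x; rw [norm_smul, Real.norm_eq_abs]
    rw [he]; exact h2.const_mul _
  · intro i φ hφ
    have hz := h3 i φ hφ
    have hco : ∀ x : Euc N, (c • gz x) i = c * gz x i := fun x => rfl
    calc ∫ x, (c * z x) * (fderiv ℝ φ x) (EuclideanSpace.single i 1)
        = ∫ x, c * (z x * (fderiv ℝ φ x) (EuclideanSpace.single i 1)) := by
          congr 1; funext x; ring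
      _ = c * ∫ x, z x * (fderiv ℝ φ x) (EuclideanSpace.single i 1) :=
          MeasureTheory.integral_const_mul _ _
      _ = c * (- ∫ x, gz x i * φ x) := by rw [hz]
      _ = - (c * ∫ x, gz x i * φ x) := by ring
      _ = - ∫ x, c * (gz x i * φ x) := by rw [MeasureTheory.integral_const_mul]
      _ = - ∫ x, (c • gz x) i * φ x := by
          congr 1; apply integral_congr_ae; filter_upwards with x
          rw [hco]; ring

lemma scaled_lhs (N : ℕ) (lam c : ℝ) (z : Euc N → ℝ) (gz : Euc N → Euc N)
    (φ : Euc N → ℝ) :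
    ∫ x, ((fderiv ℝ φ x) (c • gz x) - lam * (c * z x) * φ x / ‖x‖ ^ 2) =
    c * ∫ x, ((fderiv ℝ φ x) (gz x) - lam * z x * φ x / ‖x‖ ^ 2) := by
  rw [← MeasureTheory.integral_const_mul]
  congr 1; funext x
  rw [_root_.map_smul, smul_eq_mul]
  ring

/-- (√x₁ z, √x₂ z) is a positive weak solution of (S2) for ν > 0. -/
theorem stmt6 (N : ℕ) (hN : 5 ≤ N) (lam : ℝ)
    (hlam : lam ∈ Set.Ioo (0 : ℝ) (((N : ℝ) - 2) ^ 2 / 4))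
    (a b : ℝ) (ha : 1 < a) (ha2 : a < 2) (hb : 1 < b) (hb2 : b < 2)
    (hab : a + b = tS N) (ν : ℝ) (hν : 0 < ν)
    (x₁ x₂ : ℝ) (hx₁ : 0 < x₁) (hx₂ : 0 < x₂)
    (heq1 : x₁ ^ (tS N / 2 - 1) + ν * a * x₁ ^ (a / 2 - 1) * x₂ ^ (b / 2) = 1)
    (heq2 : x₂ ^ (tS N / 2 - 1) + ν * b * x₁ ^ (a / 2) * x₂ ^ (b / 2 - 1) = 1)
    (z : Euc N → ℝ) (gz : Euc N → Euc N)
    (hzmem : MemD12 N z gz)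
    (hzsol : IsScalarSol N lam z gz)
    (hzpos : ∀ᵐ x : Euc N, 0 < z x) :
    MemD12 N (fun x => Real.sqrt x₁ * z x) (fun x => Real.sqrt x₁ • gz x) ∧
    MemD12 N (fun x => Real.sqrt x₂ * z x) (fun x => Real.sqrt x₂ • gz x) ∧
    (∀ᵐ x : Euc N, 0 < Real.sqrt x₁ * z x) ∧
    (∀ᵐ x : Euc N, 0 < Real.sqrt x₂ * z x) ∧
    IsWeakSol2 N lam ν a b (fun x => Real.sqrt x₁ * z x) (fun x => Real.sqrt x₁ • gz x)
      (fun x => Real.sqrt x₂ * z x) (fun x => Real.sqrt x₂ • gz x) := by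
  have hs1 : 0 < Real.sqrt x₁ := Real.sqrt_pos.mpr hx₁
  have hs2 : 0 < Real.sqrt x₂ := Real.sqrt_pos.mpr hx₂
  refine ⟨memD12_const_mul N _ z gz hzmem, memD12_const_mul N _ z gz hzmem, ?_, ?_, ?_, ?_⟩
  · filter_upwards [hzpos] with x hx; positivity
  · filter_upwards [hzpos] with x hx; positivity
  · intro φ hφ
    have hkey : ∀ᵐ x : Euc N,
        Real.sqrt x₁ * (z x ^ (tS N - 1) * φ x) =
        ((Real.sqrt x₁ * z x) ^ (tS N - 1)
          + ν * a * (Real.sqrt x₁ * z x) ^ (a - 1) * (Real.sqrt x₂ * z x) ^ b) * φ x := by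
      filter_upwards [hzpos] with x hx
      have h := key_alg x₁ x₂ a b (tS N) ν (z x) hx₁ hx₂ hx hab heq1
      linear_combination (- φ x) * h
    beta_reduce
    rw [scaled_lhs N lam (Real.sqrt x₁) z gz φ, hzsol φ hφ,
      ← MeasureTheory.integral_const_mul]
    exact integral_congr_ae hkey
  · intro φ hφ
    have heq2' : x₂ ^ (tS N / 2 - 1) + ν * b * x₂ ^ (b / 2 - 1) * x₁ ^ (a / 2) = 1 := by
      linear_combination heq2
    have hkey : ∀ᵐ x : Euc N,
        Real.sqrt x₂ * (z x ^ (tS N - 1) * φ x) =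
        ((Real.sqrt x₂ * z x) ^ (tS N - 1)
          + ν * b * (Real.sqrt x₁ * z x) ^ a * (Real.sqrt x₂ * z x) ^ (b - 1)) * φ x := by
      filter_upwards [hzpos] with x hx
      have h := key_alg x₂ x₁ b a (tS N) ν (z x) hx₂ hx₁ hx (by linarith) heq2'
      linear_combination (- φ x) * h
    beta_reduce
    rw [scaled_lhs N lam (Real.sqrt x₂) z gz φ, hzsol φ hφ,
      ← MeasureTheory.integral_const_mul]
    exact integral_congr_ae hkey
end
end

section
/- With A_j, B_j and the exponents α_{jk} fixed, for every ε > 0 there exists δ > 0 such that whenever the constants satisfy 0 ≤ β̄_{jk} = β̄_{kj} < δ for all j ≠ k, the algebraic system (∗) admits a solution (t_1,…,t_r) with all t_j > 0 and |t_j − (A_j/B_j)^{1/α}| < ε for every j. In particular, (∗) has a positive solution whenever all β̄_{jk} are small enough. -/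
/-!
At zero coupling the system decouples into the scalar equations `s ^ 2 * A j = s ^ p * B j`
(`p = 2*`), solved by the ground state `t₀ j = (A j / B j) ^ (1 / (p - 2))`. There the partial
derivative of the residual in `t` is diagonal with entries `(2 - p) * t₀ j * A j ≠ 0`, and the
residual is smooth near `(0, t₀)` because `t₀` has positive entries. The implicit function
theorem therefore yields solutions `t(β)` for all couplings `β` near `0`, with `t(β) → t₀`, so
that for small `β` they are positive and close to `t₀`.
-/

open Finset

noncomputable section

open Filter Topology ContinuousLinearMap

section Diagonal

variable {ι : Type*}

theorem hasFDerivAt_piMap [Fintype ι] {g : ι → ℝ → ℝ} {d x : ι → ℝ}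
    (hg : ∀ j, HasDerivAt (g j) (d j) (x j)) :
    HasFDerivAt (Pi.map g) (pi fun j => d j • proj j : (ι → ℝ) →L[ℝ] ι → ℝ) x :=
  hasFDerivAt_pi.2 fun j => (hg j).comp_hasFDerivAt x (hasFDerivAt_apply j x)

theorem isInvertible_pi_smul_proj {d : ι → ℝ} (hd : ∀ j, d j ≠ 0) :
    (pi fun j => d j • proj (R := ℝ) (φ := fun _ : ι => ℝ) j).IsInvertible :=
  .of_inverse (g := pi fun j => (d j)⁻¹ • proj j) (by ext; simp [hd]) (by ext; simp [hd])

end Diagonal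

section Scalar

variable {A B p s : ℝ}

theorem rpow_eq_sq_mul_rpow_sub_two (hs : 0 < s) : s ^ p = s ^ 2 * s ^ (p - 2) := by
  rw [← Real.rpow_natCast, ← Real.rpow_add hs]; norm_num

theorem sq_mul_sub_rpow_mul_eq_zero (hs : 0 < s) (hsAB : s ^ (p - 2) = A / B) (hB : B ≠ 0) :
    s ^ 2 * A - s ^ p * B = 0 := by
  rw [rpow_eq_sq_mul_rpow_sub_two hs, hsAB]; field_simp; ring

theorem hasDerivAt_sq_mul_sub_rpow_mul (hs : 0 < s) (hsAB : s ^ (p - 2) = A / B) (hB : B ≠ 0) :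
    HasDerivAt (fun x => x ^ 2 * A - x ^ p * B) ((2 - p) * s * A) s := by
  have h := ((hasDerivAt_pow 2 s).mul_const A).sub
    ((Real.hasDerivAt_rpow_const (p := p) (Or.inl hs.ne')).mul_const B)
  refine h.congr_deriv ?_
  rw [show p - 1 = 1 + (p - 2) by ring, Real.rpow_add hs, Real.rpow_one, hsAB]
  field_simp; ring

end Scalar

section GroundState

variable {ι : Type*} (p : ℝ) (A B : ι → ℝ)

def groundState : ι → ℝ := fun j => (A j / B j) ^ (1 / (p - 2))

theorem groundState_pos (hA : ∀ j, 0 < A j) (hB : ∀ j, 0 < B j) (j : ι) :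
    0 < groundState p A B j :=
  Real.rpow_pos_of_pos (div_pos (hA j) (hB j)) _

theorem groundState_rpow_sub_two (hA : ∀ j, 0 < A j) (hB : ∀ j, 0 < B j) (hp : p ≠ 2) (j : ι) :
    groundState p A B j ^ (p - 2) = A j / B j := by
  rw [groundState, one_div, Real.rpow_inv_rpow (div_pos (hA j) (hB j)).le (sub_ne_zero.2 hp)]

end GroundState

section System

variable {ι : Type*} [Fintype ι] [DecidableEq ι] (p : ℝ) (A B : ι → ℝ) (a : ι → ι → ℝ)

def systemResidual (x : (ι → ι → ℝ) × (ι → ℝ)) : ι → ℝ := fun j =>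
  x.2 j ^ 2 * A j - (x.2 j ^ p * B j
    - ∑ k ∈ univ.filter (fun k => k ≠ j), a j k * x.1 j k * x.2 j ^ a j k * x.2 k ^ a k j)

theorem systemResidual_eq_zero_iff (β : ι → ι → ℝ) (t : ι → ℝ) :
    systemResidual p A B a (β, t) = 0 ↔ ∀ j, t j ^ 2 * A j = t j ^ p * B j
      - ∑ k ∈ univ.filter (fun k => k ≠ j), a j k * β j k * t j ^ a j k * t k ^ a k j := by
  simp only [funext_iff, systemResidual, Pi.zero_apply, sub_eq_zero]

theorem systemResidual_zero_fst (t : ι → ℝ) :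
    systemResidual p A B a (0, t) = Pi.map (fun j s => s ^ 2 * A j - s ^ p * B j) t := by
  ext j; simp [systemResidual, Pi.map]

theorem systemResidual_congr_offDiag {β β' : ι → ι → ℝ} (h : ∀ j k, j ≠ k → β j k = β' j k)
    (t : ι → ℝ) : systemResidual p A B a (β, t) = systemResidual p A B a (β', t) := by
  ext j
  simp only [systemResidual]
  congr 2
  refine sum_congr rfl fun k hk => ?_
  rw [h j k (mem_filter.1 hk).2.symm]

theorem contDiffAt_systemResidual {n : WithTop ℕ∞} (β : ι → ι → ℝ) {t : ι → ℝ}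
    (ht : ∀ j, 0 < t j) : ContDiffAt ℝ n (systemResidual p A B a) (β, t) := by
  have hrpow : ∀ k (q : ℝ), ContDiffAt ℝ n (fun x : (ι → ι → ℝ) × (ι → ℝ) => x.2 k ^ q) (β, t) :=
    fun k q => ContDiffAt.rpow_const_of_ne (by fun_prop) (ht k).ne'
  exact contDiffAt_pi.2 fun j => by unfold systemResidual; fun_prop

theorem exists_tendsto_groundState_systemResidual_eq_zero (hA : ∀ j, 0 < A j)
    (hB : ∀ j, 0 < B j) (hp : p ≠ 2) :
    ∃ ψ : (ι → ι → ℝ) → ι → ℝ, Tendsto ψ (𝓝 0) (𝓝 (groundState p A B)) ∧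
      ∀ᶠ β in 𝓝 0, systemResidual p A B a (β, ψ β) = 0 := by
  set t₀ := groundState p A B
  have ht₀ := groundState_pos p A B hA hB
  have ht₀AB := groundState_rpow_sub_two p A B hA hB hp
  have hF := (contDiffAt_systemResidual p A B a (n := 1) 0 ht₀).hasStrictFDerivAt one_ne_zero
  have hpartial : fderiv ℝ (systemResidual p A B a) (0, t₀) ∘L inr ℝ _ _ =
      ContinuousLinearMap.pi fun j => ((2 - p) * t₀ j * A j) • proj j := by
    refine (hF.hasFDerivAt.comp t₀ (hasFDerivAt_prodMk_right 0 t₀)).unique ?_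
    simp only [Function.comp_def, systemResidual_zero_fst]
    exact hasFDerivAt_piMap fun j =>
      hasDerivAt_sq_mul_sub_rpow_mul (ht₀ j) (ht₀AB j) (hB j).ne'
  have hinv : (fderiv ℝ (systemResidual p A B a) (0, t₀) ∘L inr ℝ _ _).IsInvertible :=
    hpartial ▸ isInvertible_pi_smul_proj fun j =>
      mul_ne_zero (mul_ne_zero (sub_ne_zero.2 hp.symm) (ht₀ j).ne') (hA j).ne'
  refine ⟨hF.implicitFunctionOfProdDomain hinv, hF.tendsto_implicitFunctionOfProdDomain hinv, ?_⟩
  have hzero : systemResidual p A B a (0, t₀) = 0 := by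
    rw [systemResidual_zero_fst]
    exact funext fun j => sq_mul_sub_rpow_mul_eq_zero (ht₀ j) (ht₀AB j) (hB j).ne'
  exact (hF.eventually_apply_implicitFunctionOfProdDomain hinv).mono fun β h => h.trans hzero

end System

theorem eventually_pos_and_abs_sub_lt {ι : Type*} [Finite ι] {x : ι → ℝ} (hx : ∀ j, 0 < x j)
    {ε : ℝ} (hε : 0 < ε) : ∀ᶠ y in 𝓝 x, ∀ j, 0 < y j ∧ |y j - x j| < ε :=
  eventually_all.2 fun j => ((continuous_apply j).tendsto x).eventually <|
    (lt_mem_nhds (hx j)).and (Metric.ball_mem_nhds (x j) hε)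

theorem norm_ite_diag_zero_lt {ι : Type*} [Fintype ι] [DecidableEq ι] {β : ι → ι → ℝ} {δ : ℝ}
    (hδ : 0 < δ) (h : ∀ j k, j ≠ k → |β j k| < δ) :
    ‖fun j k => if j = k then 0 else β j k‖ < δ := by
  refine (pi_norm_lt_iff hδ).2 fun j => (pi_norm_lt_iff hδ).2 fun k => ?_
  by_cases hjk : j = k <;> simp [hjk, hδ, h j k]

theorem two_lt_tS {N : ℕ} (hN : 3 ≤ N) : 2 < tS N := by
  have hN' : (3 : ℝ) ≤ N := by exact_mod_cast hN
  rw [tS, lt_div_iff₀ (by linarith)]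
  linarith

theorem stmt9_general (N r : ℕ) (hN : 3 ≤ N)
    (A B : Fin r → ℝ) (hA : ∀ j, 0 < A j) (hB : ∀ j, 0 < B j)
    (a : Fin r → Fin r → ℝ) :
    ∀ ε > (0 : ℝ), ∃ δ > (0 : ℝ), ∀ bb : Fin r → Fin r → ℝ,
      (∀ j k, j ≠ k → bb j k = bb k j) →
      (∀ j k, j ≠ k → 0 ≤ bb j k ∧ bb j k < δ) →
      ∃ t : Fin r → ℝ, (∀ j, 0 < t j) ∧
        (∀ j, t j ^ 2 * A j = t j ^ tS N * B j
            - ∑ k ∈ univ.filter (fun k => k ≠ j),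
                a j k * bb j k * t j ^ a j k * t k ^ a k j) ∧
        ∀ j, |t j - (A j / B j) ^ (1 / (tS N - 2))| < ε := by
  intro ε hε
  obtain ⟨ψ, hψ, hψzero⟩ := exists_tendsto_groundState_systemResidual_eq_zero (tS N) A B a hA hB
    (two_lt_tS hN).ne'
  obtain ⟨δ, hδ, hsol⟩ := Metric.eventually_nhds_iff.1 <| hψzero.and <|
    hψ.eventually (eventually_pos_and_abs_sub_lt (groundState_pos (tS N) A B hA hB) hε)
  refine ⟨δ, hδ, fun bb _ hbb => ?_⟩
  -- (∗) only sees off-diagonal couplings, and only those are assumed small.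
  set β : Fin r → Fin r → ℝ := fun j k => if j = k then 0 else bb j k
  have hβ : dist β 0 < δ := by
    rw [dist_zero_right]
    refine norm_ite_diag_zero_lt hδ fun j k hjk => abs_lt.2 ⟨?_, (hbb j k hjk).2⟩
    linarith [hbb j k hjk]
  obtain ⟨hres, hclose⟩ := hsol hβ
  rw [systemResidual_congr_offDiag (β' := bb) _ _ _ _ (fun j k hjk => if_neg hjk)] at hres
  exact ⟨ψ β, fun j => (hclose j).1, (systemResidual_eq_zero_iff _ _ _ _ _ _).1 hres,
    fun j => (hclose j).2⟩

/-- for all sufficiently small nonnegative couplings β̄_{jk}, the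
algebraic system (∗) admits a positive solution, close to ((A_j/B_j)^{1/α})_j. -/
theorem stmt9 (N r : ℕ) (hN : 3 ≤ N) (hr : 2 ≤ r)
    (A B : Fin r → ℝ) (hA : ∀ j, 0 < A j) (hB : ∀ j, 0 < B j)
    (a : Fin r → Fin r → ℝ)
    (ha : ∀ j k, j ≠ k → 1 < a j k)
    (hasum : ∀ j k, j ≠ k → a j k + a k j = tS N) :
    ∀ ε > (0 : ℝ), ∃ δ > (0 : ℝ), ∀ bb : Fin r → Fin r → ℝ,
      (∀ j k, j ≠ k → bb j k = bb k j) →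
      (∀ j k, j ≠ k → 0 ≤ bb j k ∧ bb j k < δ) →
      ∃ t : Fin r → ℝ, (∀ j, 0 < t j) ∧
        (∀ j, t j ^ 2 * A j = t j ^ tS N * B j
            - ∑ k ∈ univ.filter (fun k => k ≠ j),
                a j k * bb j k * t j ^ a j k * t k ^ a k j) ∧
        ∀ j, |t j - (A j / B j) ^ (1 / (tS N - 2))| < ε :=
  stmt9_general N r hN A B hA hB a
end
end

section
/- Let N ≥ 5, p := N/(N−2), and let α, β satisfy 1 < α, β < 2 and α + β = 2p. Then for every ν > 0 there exist x_1, x_2 with 0 < x_1 < 1 and x_2 > 0 such that x_1^{p−1} + να x_1^{α/2−1} x_2^{β/2} = 1 and x_2^{p−1} + νβ x_1^{α/2} x_2^{β/2−1} = 1. -/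
set_option maxHeartbeats 1000000
noncomputable section

/-- solvability of the algebraic system for the two-coupled doubly
critical system: for every ν > 0 there are x₁ ∈ (0,1) and x₂ > 0 solving
x₁^{p−1} + να x₁^{α/2−1} x₂^{β/2} = 1 and x₂^{p−1} + νβ x₁^{α/2} x₂^{β/2−1} = 1. -/
theorem stmt17 (N : ℕ) (hN : 5 ≤ N) (p : ℝ) (hp : p = (N : ℝ) / ((N : ℝ) - 2))
    (a b : ℝ) (ha : 1 < a) (ha2 : a < 2) (hb : 1 < b) (hb2 : b < 2)
    (hab : a + b = 2 * p) :
    ∀ ν : ℝ, 0 < ν →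
      ∃ x₁ x₂ : ℝ, 0 < x₁ ∧ x₁ < 1 ∧ 0 < x₂ ∧
        x₁ ^ (p - 1) + ν * a * x₁ ^ (a / 2 - 1) * x₂ ^ (b / 2) = 1 ∧
        x₂ ^ (p - 1) + ν * b * x₁ ^ (a / 2) * x₂ ^ (b / 2 - 1) = 1 := by
  intro ν hν
  have ha0 : (0:ℝ) < a := by linarith
  have hb0 : (0:ℝ) < b := by linarith
  have h1a : (0:ℝ) < 1 - a/2 := by linarith
  have h1b : (0:ℝ) < 1 - b/2 := by linarith
  have hp1 : 0 < p - 1 := by linarith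
  -- reduced function of c
  set f : ℝ → ℝ := fun c => c ^ (p-1) + ν*b*c^(b/2-1) - ν*a*c^(b/2) - 1 with hf
  clear_value f
  set r : ℝ := ν*b/(1+ν*a+ν*b) with hrdef
  clear_value r
  have hden : (0:ℝ) < 1+ν*a+ν*b := by positivity
  have hr0 : 0 < r := by rw [hrdef]; positivity
  have hr1 : r < 1 := by
    rw [hrdef, div_lt_one hden]; nlinarith
  set c₀ : ℝ := r ^ (1/(1-b/2)) with hc₀def
  clear_value c₀
  have hc₀0 : 0 < c₀ := by rw [hc₀def]; exact Real.rpow_pos_of_pos hr0 _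
  have hc₀1 : c₀ ≤ 1 := by
    rw [hc₀def]; exact Real.rpow_le_one hr0.le hr1.le (by positivity)
  set A : ℝ := (2/(ν*a)) ^ (1/(1-a/2)) with hAdef
  clear_value A
  set B : ℝ := (2*b/a) ^ (2/b) with hBdef
  clear_value B
  set c₁ : ℝ := max 1 (max A B) with hc₁def
  clear_value c₁
  have hc₁1 : (1:ℝ) ≤ c₁ := by rw [hc₁def]; exact le_max_left _ _
  have hc₁0 : (0:ℝ) < c₁ := lt_of_lt_of_le one_pos hc₁1
  have hc₀c₁ : c₀ ≤ c₁ := hc₀1.trans hc₁1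
  -- f c₀ ≥ 0
  have hc₀pow : c₀ ^ (1 - b/2) = r := by
    rw [hc₀def, ← Real.rpow_mul hr0.le, one_div,
      inv_mul_cancel₀ (ne_of_gt h1b), Real.rpow_one]
  have hc₀neg : c₀ ^ (b/2 - 1) = r⁻¹ := by
    have : b/2 - 1 = -(1 - b/2) := by ring
    rw [this, Real.rpow_neg hc₀0.le, hc₀pow]
  have hfc₀ : 0 ≤ f c₀ := by
    have h1 : ν*b*c₀^(b/2-1) = 1+ν*a+ν*b := by
      rw [hc₀neg, hrdef]
      field_simp
    have h2 : c₀ ^ (b/2) ≤ 1 := Real.rpow_le_one hc₀0.le hc₀1 (by positivity)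
    have h3 : 0 ≤ c₀ ^ (p-1) := (Real.rpow_pos_of_pos hc₀0 _).le
    simp only [hf]
    nlinarith [mul_le_mul_of_nonneg_left h2 (le_of_lt (mul_pos hν ha0))]
  -- f c₁ ≤ 0
  have hA : A ≤ c₁ := by rw [hc₁def]; exact le_trans (le_max_left _ _) (le_max_right _ _)
  have hB : B ≤ c₁ := by rw [hc₁def]; exact le_trans (le_max_right _ _) (le_max_right _ _)
  have hνa : (0:ℝ) < 2/(ν*a) := by positivity
  have hApow : A ^ (1 - a/2) = 2/(ν*a) := by
    rw [hAdef, ← Real.rpow_mul hνa.le, one_div,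
      inv_mul_cancel₀ (ne_of_gt h1a), Real.rpow_one]
  have hc₁a : c₁ ^ (a/2 - 1) ≤ ν*a/2 := by
    have h1 : 2/(ν*a) ≤ c₁ ^ (1 - a/2) := by
      rw [← hApow]
      exact Real.rpow_le_rpow (by rw [hAdef]; positivity) hA h1a.le
    have h2 : a/2 - 1 = -(1 - a/2) := by ring
    rw [h2, Real.rpow_neg hc₁0.le]
    have h3 : (c₁ ^ (1 - a/2))⁻¹ ≤ (2/(ν*a))⁻¹ :=
      inv_anti₀ hνa h1
    calc (c₁ ^ (1 - a/2))⁻¹ ≤ (2/(ν*a))⁻¹ := h3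
      _ = ν*a/2 := by field_simp
  have hBpow : B ^ (b/2) = 2*b/a := by
    have hba : (0:ℝ) ≤ 2*b/a := by positivity
    rw [hBdef, ← Real.rpow_mul hba]
    rw [show (2/b)*(b/2) = 1 by field_simp, Real.rpow_one]
  have hc₁b : 2*b/a ≤ c₁ ^ (b/2) := by
    rw [← hBpow]
    exact Real.rpow_le_rpow (by rw [hBdef]; positivity) hB (by positivity)
  have hc₁bneg : c₁ ^ (b/2 - 1) ≤ 1 :=
    Real.rpow_le_one_of_one_le_of_nonpos hc₁1 (by linarith)
  have hc₁split : c₁ ^ (p-1) = c₁ ^ (a/2 - 1) * c₁ ^ (b/2) := by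
    rw [← Real.rpow_add hc₁0]
    congr 1; linarith
  have hfc₁ : f c₁ ≤ 0 := by
    have hbpos : 0 < c₁ ^ (b/2) := Real.rpow_pos_of_pos hc₁0 _
    have h1 : c₁ ^ (p-1) ≤ (ν*a/2) * c₁ ^ (b/2) := by
      rw [hc₁split]
      exact mul_le_mul_of_nonneg_right hc₁a hbpos.le
    have h2 : ν*b*c₁^(b/2-1) ≤ ν*b := by nlinarith [mul_le_mul_of_nonneg_left hc₁bneg (le_of_lt (mul_pos hν hb0))]
    have h3 : ν*b ≤ (ν*a/2) * c₁ ^ (b/2) := by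
      have := mul_le_mul_of_nonneg_left hc₁b (le_of_lt (show (0:ℝ) < ν*a/2 by positivity))
      calc ν*b = (ν*a/2) * (2*b/a) := by field_simp
        _ ≤ (ν*a/2) * c₁ ^ (b/2) := this
    simp only [hf]
    linarith
  -- continuity and IVT
  have hcont : ContinuousOn f (Set.Icc c₀ c₁) := by
    have hne' : ∀ e : ℝ, ContinuousOn (fun x : ℝ => x ^ e) (Set.Icc c₀ c₁) := by
      intro e x hx
      exact (Real.continuousAt_rpow_const x e
        (Or.inl (ne_of_gt (lt_of_lt_of_le hc₀0 hx.1)))).continuousWithinAt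
    rw [hf]
    exact (((hne' (p-1)).add ((continuousOn_const).mul (hne' (b/2-1)))).sub
      ((continuousOn_const).mul (hne' (b/2)))).sub continuousOn_const
  have hmem : (0:ℝ) ∈ Set.Icc (f c₁) (f c₀) := ⟨hfc₁, hfc₀⟩
  obtain ⟨c, hc, hfc⟩ := intermediate_value_Icc' hc₀c₁ hcont hmem
  have hc0 : 0 < c := lt_of_lt_of_le hc₀0 hc.1
  -- build the solution
  set K : ℝ := 1 + ν*a*c^(b/2) with hKdef
  clear_value K
  have hcb : 0 < c ^ (b/2) := Real.rpow_pos_of_pos hc0 _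
  have hK1 : 1 < K := by rw [hKdef]; linarith [mul_pos (mul_pos hν ha0) hcb]
  have hK0 : 0 < K := by linarith
  have hKeq : c^(p-1) + ν*b*c^(b/2-1) = K := by
    simp only [hf] at hfc
    rw [hKdef]; linarith
  set x₁ : ℝ := K ^ (-(1/(p-1))) with hx₁def
  clear_value x₁
  have hx₁0 : 0 < x₁ := by rw [hx₁def]; exact Real.rpow_pos_of_pos hK0 _
  have hx₁1 : x₁ < 1 := by
    rw [hx₁def]
    exact Real.rpow_lt_one_of_one_lt_of_neg hK1 (neg_lt_zero.mpr (by positivity))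
  have hx₁pow : x₁ ^ (p-1) = K⁻¹ := by
    rw [hx₁def, ← Real.rpow_mul hK0.le]
    rw [show -(1/(p-1))*(p-1) = -1 by field_simp]
    exact Real.rpow_neg_one K
  refine ⟨x₁, c * x₁, hx₁0, hx₁1, by positivity, ?_, ?_⟩
  · have hsplit : (c * x₁) ^ (b/2) = c^(b/2) * x₁^(b/2) :=
      Real.mul_rpow hc0.le hx₁0.le
    have hx₁add : x₁^(a/2-1) * x₁^(b/2) = x₁^(p-1) := by
      rw [← Real.rpow_add hx₁0]; congr 1; linarith
    calc x₁ ^ (p-1) + ν*a*x₁^(a/2-1)*(c*x₁)^(b/2)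
        = x₁^(p-1) + ν*a*c^(b/2)*(x₁^(a/2-1)*x₁^(b/2)) := by rw [hsplit]; ring
      _ = x₁^(p-1) * K := by rw [hx₁add, hKdef]; ring
      _ = 1 := by rw [hx₁pow]; field_simp
  · have hs1 : (c * x₁) ^ (p-1) = c^(p-1) * x₁^(p-1) :=
      Real.mul_rpow hc0.le hx₁0.le
    have hs2 : (c * x₁) ^ (b/2-1) = c^(b/2-1) * x₁^(b/2-1) :=
      Real.mul_rpow hc0.le hx₁0.le
    have hx₁add : x₁^(a/2) * x₁^(b/2-1) = x₁^(p-1) := by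
      rw [← Real.rpow_add hx₁0]; congr 1; linarith
    calc (c*x₁) ^ (p-1) + ν*b*x₁^(a/2)*(c*x₁)^(b/2-1)
        = x₁^(p-1) * (c^(p-1) + ν*b*c^(b/2-1)) := by
          rw [hs1, hs2, ← hx₁add]; ring
      _ = x₁^(p-1) * K := by rw [hKeq]
      _ = 1 := by rw [hx₁pow]; field_simp
end
end
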